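/- Let A = (a_{ij}) be a generalized Cartan matrix indexed by a finite set I, and let X be a good I-colored directed graph with a maximum element x₀, with the homogeneous local confluence property, and satisfying axiom (S2): whenever ẽ_i x ≠ 0, for all j ≠ i one has Δ^e_φ(i,j,x) − Δ^e_ε(i,j,x) = a_{ji}. Then for every x ∈ X and every i ∈ I, φ_i(x) − ε_i(x) = φ_i(x₀) − Σ_{j∈I} a_{ij}·m_j(x), where m_j(x) is the multiplicity of j in the well-defined weight multiset wt(x) (the multiset of colors of any word (i₁,…,i_s) with f̃_{i₁}⋯f̃_{i_s} x₀ = x). -/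
import Mathlib


def iterOpt {X : Type*} (g : X → Option X) : ℕ → X → Option X
  | 0, x => some x
  | n+1, x => (g x).bind (iterOpt g n)

def chainOpt {X I : Type*} (g : I → X → Option X) (w : List I) (x : X) : Option X :=
  w.foldr (fun i o => o.bind (g i)) (some x)

/-- A good I-colored directed graph: partial operators `e i`, `f i` that are mutually
inverse partial bijections, together with the (finite) string lengths `eps`, `phi`. -/
structure GoodGraph (I : Type*) (X : Type*) where
  e : I → X → Option X
  f : I → X → Option X
  eps : I → X → ℕ
  phi : I → X → ℕ
  ef : ∀ i x y, e i y = some x ↔ f i x = some y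
  eps_ne : ∀ i x, iterOpt (e i) (eps i x) x ≠ none
  eps_top : ∀ i x, iterOpt (e i) (eps i x + 1) x = none
  phi_ne : ∀ i x, iterOpt (f i) (phi i x) x ≠ none
  phi_top : ∀ i x, iterOpt (f i) (phi i x + 1) x = none

/-- Maximum element: no incoming arrows, and every element reachable from it. -/
def IsMaxElem {I X : Type*} (G : GoodGraph I X) (x0 : X) : Prop :=
  (∀ i, G.e i x0 = none) ∧ ∀ x, ∃ w : List I, chainOpt G.f w x0 = some x

/-- Homogeneous local confluence property. -/
def HLC {I X : Type*} (G : GoodGraph I X) : Prop :=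
  ∀ (x : X) (i j : I), i ≠ j → G.e i x ≠ none → G.e j x ≠ none →
    ∃ (w w' : List I) (z : X), 2 ≤ w.length ∧
      (w : Multiset I) = (w' : Multiset I) ∧
      w.getLast? = some i ∧ w'.getLast? = some j ∧
      chainOpt G.e w x = some z ∧ chainOpt G.e w' x = some z

def axS2 {I X : Type*} (A : I → I → ℤ) (G : GoodGraph I X) : Prop :=
  ∀ i j : I, i ≠ j → ∀ x y : X, G.e i x = some y →
    ((G.phi j y : ℤ) - G.phi j x) - ((G.eps j y : ℤ) - G.eps j x) = A j i

def axS3 {I X : Type*} (G : GoodGraph I X) : Prop :=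
  ∀ i j : I, i ≠ j → ∀ x y : X, G.e i x = some y →
    G.phi j y ≤ G.phi j x ∧ G.eps j x ≤ G.eps j y

def axS4 {I X : Type*} (G : GoodGraph I X) : Prop :=
  ∀ i j : I, i ≠ j → ∀ x xi xj : X, G.e i x = some xi → G.e j x = some xj →
    ((G.eps j xi = G.eps j x →
        ∃ z, G.e j xi = some z ∧ G.e i xj = some z ∧ G.phi i xi = G.phi i z) ∧
     (G.eps j xi = G.eps j x + 1 → G.eps i xj = G.eps i x + 1 →
        ∃ z zi zj, chainOpt G.e [i, j, j, i] x = some z ∧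
          chainOpt G.e [j, i, i, j] x = some z ∧
          G.f i z = some zi ∧ G.f j z = some zj ∧
          G.phi j zi = G.phi j z + 1 ∧ G.phi i zj = G.phi i z + 1))

def axS5 {I X : Type*} (G : GoodGraph I X) : Prop :=
  ∀ i j : I, i ≠ j → ∀ x xi xj : X, G.f i x = some xi → G.f j x = some xj →
    ((G.phi j xi = G.phi j x →
        ∃ z, G.f j xi = some z ∧ G.f i xj = some z ∧ G.eps i xi = G.eps i z) ∧
     (G.phi j xi = G.phi j x + 1 → G.phi i xj = G.phi i x + 1 →
        ∃ z zi zj, chainOpt G.f [i, j, j, i] x = some z ∧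
          chainOpt G.f [j, i, i, j] x = some z ∧
          G.e i z = some zi ∧ G.e j z = some zj ∧
          G.eps j zi = G.eps j z + 1 ∧ G.eps i zj = G.eps i z + 1))

/-- `X` is `A`-regular. -/
def ARegular {I X : Type*} (A : I → I → ℤ) (G : GoodGraph I X) : Prop :=
  axS2 A G ∧ axS3 G ∧ axS4 G ∧ axS5 G

/-- (S6), for the ordered pair (i,j) with a_{ij} = -2, a_{ji} = -1. -/
def axS6 {I X : Type*} (G : GoodGraph I X) (i j : I) : Prop :=
  ∀ x xi xj : X, G.e i x = some xi → G.e j x = some xj →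
    G.eps j xi = G.eps j x + 1 → G.eps i xj = G.eps i x + 2 →
    ∃ y y', chainOpt G.e [i, i, j] x = some y ∧
      chainOpt G.e [i, i, j, j, i] x = some y' ∧
      ∀ fy fy', G.f i y = some fy → G.f i y' = some fy' →
        (¬ (G.phi j fy = G.phi j y + 1 ∧ G.phi j fy' = G.phi j y')) ∧
        (G.phi j fy = G.phi j y + 1 → G.phi j fy' = G.phi j y' + 1 →
          ∃ t, G.e i y = some t ∧ G.f j y' = some t ∧ G.phi i t = G.phi i y' + 1) ∧
        (G.phi j fy = G.phi j y → G.phi j fy' = G.phi j y' + 1 →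
          ∃ z zi zj, chainOpt G.e [j, i, i, i, j, j, i] x = some z ∧
            chainOpt G.e [i, j, j, i, i, i, j] x = some z ∧
            G.f i z = some zi ∧ G.f j z = some zj ∧
            G.phi j zi = G.phi j z + 1 ∧ G.phi i zj = G.phi i z + 2) ∧
        (G.phi j fy = G.phi j y → G.phi j fy' = G.phi j y' →
          ∃ t, G.e i y = some t ∧ G.f j y' = some t ∧ G.phi i t = G.phi i y' + 2 ∧
            ∃ u v, chainOpt G.f [i, i] y' = some u ∧ G.f j u = some v ∧
              G.phi i v = G.phi i u)

/-- (S7). -/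
def axS7 {I X : Type*} (G : GoodGraph I X) (i j : I) : Prop :=
  ∀ x xi xj : X, G.f i x = some xi → G.f j x = some xj →
    G.phi j xi = G.phi j x + 1 → G.phi i xj = G.phi i x + 2 →
    ∃ y y', chainOpt G.f [i, i, j] x = some y ∧
      chainOpt G.f [i, i, j, j, i] x = some y' ∧
      ∀ ey ey', G.e i y = some ey → G.e i y' = some ey' →
        G.eps j ey = G.eps j y → G.eps j ey' = G.eps j y' + 1 →
        ∃ z, chainOpt G.f [j, i, i, i, j, j, i] x = some z ∧
          chainOpt G.f [i, j, j, i, i, i, j] x = some z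

/-- (S8). -/
def axS8 {I X : Type*} (G : GoodGraph I X) (i j : I) : Prop :=
  ∀ x xi xj : X, G.f i x = some xi → G.f j x = some xj →
    G.phi j xi = G.phi j x + 1 → G.phi i xj = G.phi i x + 1 → 2 ≤ G.phi i x →
    ∃ z, chainOpt G.f [i, j, j, i, i] x = some z ∧
      chainOpt G.f [j, i, i, i, j] x = some z

/-- (S9). -/
def axS9 {I X : Type*} (G : GoodGraph I X) (i j : I) : Prop :=
  ∀ x xi xj : X, G.f i x = some xi → G.f j x = some xj →
    G.phi j xi = G.phi j x → G.phi i xj = G.phi i x + 2 →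
    ∀ v u, chainOpt G.f [i, i] x = some v → G.f j v = some u → G.phi i u = G.phi i v →
    ∃ z, chainOpt G.f [i, j, j, i, i] x = some z ∧
      chainOpt G.f [j, i, i, i, j] x = some z

def IsGCM {I : Type*} (A : I → I → ℤ) : Prop :=
  (∀ i, A i i = 2) ∧ (∀ i j, i ≠ j → A i j ≤ 0) ∧ (∀ i j, A i j = 0 ↔ A j i = 0)

def IsSymmetrizable {I : Type*} (A : I → I → ℤ) : Prop :=
  ∃ d : I → ℤ, (∀ i, 0 < d i) ∧ ∀ i j, d i * A i j = d j * A j i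

/-- Every 2×2 principal submatrix of `A` is `A₁⊕A₁`, `A₂`, `B₂` or `ᵗB₂`. -/
def Rank2OK {I : Type*} (A : I → I → ℤ) : Prop :=
  ∀ i j, i ≠ j →
    (A i j = 0 ∧ A j i = 0) ∨ (A i j = -1 ∧ A j i = -1) ∨
    (A i j = -2 ∧ A j i = -1) ∨ (A i j = -1 ∧ A j i = -2)

/-- (S6)--(S9) hold for every ordered pair with `A|_{i,j} = B₂`. -/
def ExtraB2 {I X : Type*} (A : I → I → ℤ) (G : GoodGraph I X) : Prop :=
  ∀ i j, A i j = -2 → A j i = -1 →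
    axS6 G i j ∧ axS7 G i j ∧ axS8 G i j ∧ axS9 G i j

lemma iterOpt_succ' {X : Type*} (g : X → Option X) (n : ℕ) (x y : X) (h : g x = some y) :
    iterOpt g (n+1) x = iterOpt g n y := by
  show (g x).bind (iterOpt g n) = _
  rw [h]; rfl

lemma iterOpt_pred {X : Type*} (g : X → Option X) :
    ∀ (n : ℕ) (x : X), iterOpt g (n+1) x ≠ none → iterOpt g n x ≠ none
  | 0, x, _ => by simp [iterOpt]
  | n+1, x, h => by
    cases hg : g x with
    | none =>
      exfalso; apply h
      show (g x).bind (iterOpt g (n+1)) = none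
      rw [hg]; rfl
    | some y =>
      rw [iterOpt_succ' g (n+1) x y hg] at h
      rw [iterOpt_succ' g n x y hg]
      exact iterOpt_pred g n y h

lemma iterOpt_none_add {X : Type*} (g : X → Option X) (x : X) (n : ℕ)
    (h : iterOpt g n x = none) : ∀ k, iterOpt g (n + k) x = none := by
  intro k
  induction k with
  | zero => simpa
  | succ k ih =>
    by_contra hc
    rw [Nat.add_succ] at hc
    exact (iterOpt_pred g (n+k) x hc) ih

lemma len_unique {X : Type*} (g : X → Option X) (x : X) (m n : ℕ)
    (hm : iterOpt g m x ≠ none) (hm' : iterOpt g (m+1) x = none)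
    (hn : iterOpt g n x ≠ none) (hn' : iterOpt g (n+1) x = none) : m = n := by
  rcases lt_trichotomy m n with h | h | h
  · exact absurd (by
      have := iterOpt_none_add g x (m+1) hm' (n - (m+1))
      rwa [show m + 1 + (n - (m+1)) = n by omega] at this) hn
  · exact h
  · exact absurd (by
      have := iterOpt_none_add g x (n+1) hn' (m - (n+1))
      rwa [show n + 1 + (m - (n+1)) = m by omega] at this) hm

lemma phi_f {I X : Type*} (G : GoodGraph I X) (i : I) (x y : X) (h : G.f i x = some y) :
    G.phi i x = G.phi i y + 1 := by
  refine len_unique (G.f i) x _ _ (G.phi_ne i x) (G.phi_top i x) ?_ ?_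
  · rw [iterOpt_succ' _ _ x y h]; exact G.phi_ne i y
  · rw [iterOpt_succ' _ (G.phi i y + 1) x y h]; exact G.phi_top i y

lemma eps_e {I X : Type*} (G : GoodGraph I X) (i : I) (x y : X) (h : G.e i x = some y) :
    G.eps i x = G.eps i y + 1 := by
  refine len_unique (G.e i) x _ _ (G.eps_ne i x) (G.eps_top i x) ?_ ?_
  · rw [iterOpt_succ' _ _ x y h]; exact G.eps_ne i y
  · rw [iterOpt_succ' _ (G.eps i y + 1) x y h]; exact G.eps_top i y

lemma chainOpt_cons {X I : Type*} (g : I → X → Option X) (a : I) (w : List I) (x : X) :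
    chainOpt g (a :: w) x = (chainOpt g w x).bind (g a) := rfl

theorem stmt_16 {I X : Type} [Fintype I] [DecidableEq I]
    (A : I → I → ℤ) (hA : IsGCM A)
    (G : GoodGraph I X) (x0 : X) (hmax : IsMaxElem G x0) (hconf : HLC G)
    (hS2 : axS2 A G) :
    ∀ (x : X) (w : List I), chainOpt G.f w x0 = some x →
      ∀ i : I, (G.phi i x : ℤ) - (G.eps i x : ℤ) =
        (G.phi i x0 : ℤ) - ∑ j : I, A i j * (w.count j : ℤ) := by
  intro x w
  induction w generalizing x with
  | nil =>
    intro h i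
    have hx : x0 = x := by simpa [chainOpt] using h
    subst hx
    have heps : G.eps i x0 = 0 := by
      refine (len_unique (G.e i) x0 _ 0 (G.eps_ne i x0) (G.eps_top i x0) (by simp [iterOpt]) ?_).symm ▸ rfl
      show (G.e i x0).bind (iterOpt (G.e i) 0) = none
      rw [hmax.1 i]; rfl
    simp [heps]
  | cons a w ih =>
    intro h i
    rw [chainOpt_cons] at h
    obtain ⟨y, hy, hfy⟩ : ∃ y, chainOpt G.f w x0 = some y ∧ G.f a y = some x := by
      cases hw : chainOpt G.f w x0 with
      | none => rw [hw] at h; exact absurd h (by simp)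
      | some y => rw [hw] at h; exact ⟨y, rfl, h⟩
    have hey : G.e a x = some y := (G.ef a y x).mpr hfy
    have ihy := ih y hy i
    have hsum : ∑ j : I, A i j * (((a :: w).count j : ℕ) : ℤ) =
        (∑ j : I, A i j * (w.count j : ℤ)) + A i a := by
      have : ∀ j : I, A i j * (((a :: w).count j : ℕ) : ℤ) =
          A i j * (w.count j : ℤ) + (if j = a then A i j else 0) := by
        intro j
        rw [List.count_cons]
        rcases eq_or_ne j a with rfl | hja
        · simp; push_cast; ring
        · simp [hja, Ne.symm hja]
      rw [Finset.sum_congr rfl fun j _ => this j, Finset.sum_add_distrib,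
        Finset.sum_ite_eq' Finset.univ a (fun j => A i j)]
      simp
    rw [hsum]
    have hkey : (G.phi i x : ℤ) - (G.eps i x : ℤ) =
        (G.phi i y : ℤ) - (G.eps i y : ℤ) - A i a := by
      rcases eq_or_ne i a with rfl | hia
      · have h1 := phi_f G i y x hfy
        have h2 := eps_e G i x y hey
        have h3 := hA.1 i
        rw [h3, h1, h2]; push_cast; ring
      · have := hS2 a i (Ne.symm hia) x y hey
        linarith
    rw [hkey, ihy]; ring
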